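/- arXiv:2404.10783 — 5 statements merged into one kernel-verified Lean document; each statement's English description precedes it below -/
import Mathlib

section
/- Let a, b, c be positive reals with a + 1 ≠ b + c, and set x = (b^c * c^b / a)^(1/(a - b - c + 1)), y = a*x, v = b*x, w = c*x. Then x^y * y^x = v^w * w^v. -/
theorem stmt_4 (a b c : ℝ) (ha : 0 < a) (hb : 0 < b) (hc : 0 < c)
    (h : a + 1 ≠ b + c)
    (x y v w : ℝ)
    (hx : x = (b ^ c * c ^ b / a) ^ (1 / (a - b - c + 1)))
    (hy : y = a * x) (hv : v = b * x) (hw : w = c * x) :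
    x ^ y * y ^ x = v ^ w * w ^ v := by
  have hK : (0:ℝ) < b ^ c * c ^ b / a := by positivity
  have hxpos : 0 < x := by rw [hx]; exact Real.rpow_pos_of_pos hK _
  have hd : a - b - c + 1 ≠ 0 := by intro h'; apply h; linarith
  have hypos : 0 < y := by rw [hy]; positivity
  have hvpos : 0 < v := by rw [hv]; positivity
  have hwpos : 0 < w := by rw [hw]; positivity
  have hlogx : (a - b - c + 1) * Real.log x = Real.log (b ^ c * c ^ b / a) := by
    rw [hx, Real.log_rpow hK]; field_simp
  have hlogK : Real.log (b ^ c * c ^ b / a)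
      = c * Real.log b + b * Real.log c - Real.log a := by
    rw [Real.log_div (by positivity) ha.ne', Real.log_mul (by positivity) (by positivity),
      Real.log_rpow hb, Real.log_rpow hc]
  have hlog : Real.log (x ^ y * y ^ x) = Real.log (v ^ w * w ^ v) := by
    rw [Real.log_mul (by positivity) (by positivity),
        Real.log_mul (by positivity) (by positivity),
        Real.log_rpow hxpos, Real.log_rpow hypos, Real.log_rpow hvpos, Real.log_rpow hwpos,
        hy, hv, hw, Real.log_mul ha.ne' hxpos.ne', Real.log_mul hb.ne' hxpos.ne',
        Real.log_mul hc.ne' hxpos.ne']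
    nlinarith [hlogx, hlogK]
  calc x ^ y * y ^ x = Real.exp (Real.log (x ^ y * y ^ x)) :=
        (Real.exp_log (by positivity)).symm
    _ = Real.exp (Real.log (v ^ w * w ^ v)) := by rw [hlog]
    _ = v ^ w * w ^ v := Real.exp_log (by positivity)
end

section
/- Let b, c be positive reals with b + c ≠ 0, and set x = b^c * c^b / (b + c), y = b^c * c^b, v = b*x, w = c*x. Then x^y * y^x = v^w * w^v. -/
theorem stmt_5 (b c : ℝ) (hb : 0 < b) (hc : 0 < c) (hbc : b + c ≠ 0)
    (x y v w : ℝ)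
    (hx : x = b ^ c * c ^ b / (b + c))
    (hy : y = b ^ c * c ^ b)
    (hv : v = b * x) (hw : w = c * x) :
    x ^ y * y ^ x = v ^ w * w ^ v := by
  have hs : (0:ℝ) < b + c := by positivity
  have hx0 : 0 < x := by rw [hx]; positivity
  have hy' : y = (c + b) * x := by rw [hy, hx]; field_simp; ring
  calc x ^ y * y ^ x
      = x ^ ((c + b) * x) * (b ^ c * c ^ b) ^ x := by
        nth_rewrite 1 [hy']; rw [hy]
    _ = x ^ (c * x) * x ^ (b * x) * ((b ^ c) ^ x * (c ^ b) ^ x) := by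
        rw [← Real.rpow_add hx0,
          Real.mul_rpow (Real.rpow_nonneg hb.le c) (Real.rpow_nonneg hc.le b)]
        ring_nf
    _ = (b ^ (c * x) * x ^ (c * x)) * (c ^ (b * x) * x ^ (b * x)) := by
        rw [← Real.rpow_mul hb.le, ← Real.rpow_mul hc.le]; ring
    _ = v ^ w * w ^ v := by
        rw [hv, hw, Real.mul_rpow hb.le hx0.le, Real.mul_rpow hc.le hx0.le]
end

section
/- For positive rationals x and y with x < y, if x^y = y^x then there exists a positive integer n with x = (1 + 1/n)^n and y = (1 + 1/n)^(n+1). -/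
lemma nth_pow_of_pow_eq_pow {a p d q : ℕ} (hd : 0 < d) (hp : 0 < p)
    (hdq : Nat.Coprime d q) (h : a ^ d = p ^ q) : ∃ c, p = c ^ d := by
  have ha : a ≠ 0 := by
    intro h0
    rw [h0, zero_pow hd.ne'] at h
    exact (pow_ne_zero q hp.ne') h.symm
  have hdvd : ∀ l : ℕ, d ∣ p.factorization l := by
    intro l
    have hf := congrArg Nat.factorization h
    rw [Nat.factorization_pow, Nat.factorization_pow] at hf
    have := congrArg (fun f => f l) hf
    simp only [Finsupp.smul_apply, smul_eq_mul] at this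
    exact hdq.dvd_of_dvd_mul_left ⟨a.factorization l, this.symm⟩
  refine ⟨p.factorization.prod fun l k => l ^ (k / d), ?_⟩
  rw [Finsupp.prod, ← Finset.prod_pow]
  conv_lhs => rw [← Nat.factorization_prod_pow_eq_self hp.ne']
  rw [Finsupp.prod]
  apply Finset.prod_congr rfl
  intro l hl
  rw [← pow_mul, Nat.div_mul_cancel (hdvd l)]

lemma step_one_lt {x y : ℚ} (hx : 0 < x) (hy : 0 < y) (hxy : x < y)
    (h : (x : ℝ) ^ (y : ℝ) = (y : ℝ) ^ (x : ℝ)) : 1 < x := by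
  by_contra hx1
  push_neg at hx1
  have hX : (0:ℝ) < x := by exact_mod_cast hx
  have hY : (0:ℝ) < y := by exact_mod_cast hy
  have hXY : (x:ℝ) < y := by exact_mod_cast hxy
  have hX1 : (x:ℝ) ≤ 1 := by exact_mod_cast hx1
  have hlog : (y:ℝ) * Real.log x = (x:ℝ) * Real.log y := by
    have := congrArg Real.log h
    rwa [Real.log_rpow hX, Real.log_rpow hY] at this
  rcases eq_or_lt_of_le hX1 with hxe | hxl
  · rw [hxe, Real.log_one, mul_zero, one_mul] at hlog
    rcases Real.log_eq_zero.mp hlog.symm with h1 | h1 | h1 <;> nlinarith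
  · have lX : Real.log x < 0 := Real.log_neg hX hxl
    rcases le_or_gt 1 (y:ℝ) with hy1 | hy1
    · have lY : 0 ≤ Real.log y := Real.log_nonneg hy1
      nlinarith
    · have lY : Real.log y < 0 := Real.log_neg hY hy1
      have lXY : Real.log x < Real.log y := Real.log_lt_log hX hXY
      nlinarith

lemma step_rat_eq {x t : ℚ} (hx1 : 1 < x) (ht1 : 1 < t)
    (h : (x : ℝ) ^ ((t*x : ℚ) : ℝ) = ((t*x : ℚ) : ℝ) ^ (x : ℝ)) :
    x ^ t.num.toNat = (t * x) ^ t.den := by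
  have hX0 : (0:ℝ) < (x:ℝ) := by exact_mod_cast lt_trans one_pos hx1
  have hT0 : (0:ℝ) < (t:ℝ) := by exact_mod_cast lt_trans one_pos ht1
  have hTX : (0:ℝ) < (t:ℝ) * (x:ℝ) := mul_pos hT0 hX0
  have hcast : ((t*x : ℚ) : ℝ) = (t:ℝ) * (x:ℝ) := by push_cast; ring
  rw [hcast] at h
  have e1 : ((x:ℝ) ^ (t:ℝ)) ^ (x:ℝ) = ((t:ℝ) * x) ^ (x:ℝ) := by
    rw [← Real.rpow_mul hX0.le]
    exact h
  have l1 := congrArg Real.log e1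
  rw [Real.log_rpow (Real.rpow_pos_of_pos hX0 _), Real.log_rpow hTX] at l1
  have l2 : Real.log ((x:ℝ) ^ (t:ℝ)) = Real.log ((t:ℝ) * x) :=
    mul_left_cancel₀ hX0.ne' l1
  have key : (x:ℝ) ^ (t:ℝ) = (t:ℝ) * x := by
    have := congrArg Real.exp l2
    rwa [Real.exp_log (Real.rpow_pos_of_pos hX0 _), Real.exp_log hTX] at this
  have hP : (t:ℝ) * (t.den:ℝ) = (t.num.toNat : ℝ) := by
    have h1 : (t * (t.den:ℚ) : ℚ) = (t.num : ℚ) := Rat.mul_den_eq_num t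
    have h2 : (t.num.toNat : ℤ) = t.num := Int.toNat_of_nonneg (by positivity)
    have h3 : (t * (t.den:ℚ) : ℚ) = ((t.num.toNat : ℤ) : ℚ) := by rw [h2]; exact h1
    exact_mod_cast h3
  have e2 : (x:ℝ) ^ (t.num.toNat : ℕ) = ((t:ℝ) * x) ^ (t.den : ℕ) := by
    rw [← Real.rpow_natCast (x:ℝ), ← Real.rpow_natCast ((t:ℝ)*x), ← hP,
      Real.rpow_mul hX0.le, key]
  have : ((x ^ t.num.toNat : ℚ) : ℝ) = (((t*x) ^ t.den : ℚ) : ℝ) := by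
    push_cast
    exact e2
  exact_mod_cast this

lemma ineq_lemma (e : ℕ) (he : 1 ≤ e) : ∀ d, 2 ≤ d → e ^ d + d + 1 ≤ (e + 1) ^ d := by
  intro d
  induction d with
  | zero => omega
  | succ n ih =>
    intro hd
    rcases Nat.lt_or_ge n 2 with h2 | h2
    · have hn : n = 1 := by omega
      subst hn
      ring_nf
      nlinarith
    · have hkey := ih h2
      rw [pow_succ, pow_succ]
      nlinarith [Nat.one_le_pow n e he]

theorem stmt_13 (x y : ℚ) (hx : 0 < x) (hy : 0 < y) (hxy : x < y)
    (h : (x : ℝ) ^ (y : ℝ) = (y : ℝ) ^ (x : ℝ)) :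
    ∃ n : ℕ, 0 < n ∧ x = (1 + 1 / (n : ℚ)) ^ (n : ℕ) ∧
      y = (1 + 1 / (n : ℚ)) ^ (n + 1 : ℕ) := by
  have hx1 : 1 < x := step_one_lt hx hy hxy h
  have hx0 : x ≠ 0 := ne_of_gt hx
  set t : ℚ := y / x with htdef
  have hyx : y = t * x := by rw [htdef]; field_simp
  have ht1 : 1 < t := by
    rw [htdef, lt_div_iff₀ hx]
    linarith
  have ht0 : 0 < t := lt_trans one_pos ht1
  have hmain : x ^ t.num.toNat = (t * x) ^ t.den := by
    apply step_rat_eq hx1 ht1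
    rw [← hyx]
    exact h
  set P := t.num.toNat with hPdef
  set q := t.den with hqdef
  have hq0 : 0 < q := t.pos
  have htnum : 0 < t.num := Rat.num_pos.mpr ht0
  have hPq : q < P := by
    have h1 : (t.den : ℚ) < (t.num : ℚ) := by
      have h2 := Rat.mul_den_eq_num t
      have h3 : (0:ℚ) < (t.den:ℚ) := by exact_mod_cast hq0
      nlinarith
    have h2 : (q:ℤ) < t.num := by exact_mod_cast h1
    omega
  set d := P - q with hddef
  have hd0 : 0 < d := by omega
  have hPsum : P = q + d := by omega
  have hxd : x ^ d = t ^ q := by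
    have h1 : x ^ P = t ^ q * x ^ q := by rw [hmain, mul_pow]
    have h2 : x ^ q * x ^ d = t ^ q * x ^ q := by rw [← pow_add, ← hPsum, h1]
    have h3 : x ^ d * x ^ q = t ^ q * x ^ q := by rw [mul_comm]; exact h2
    exact mul_right_cancel₀ (pow_ne_zero q hx0) h3
  have hnum : x.num ^ d = t.num ^ q := by
    have := congrArg Rat.num hxd
    simpa [Rat.num_pow] using this
  have hden : x.den ^ d = q ^ q := by
    have := congrArg Rat.den hxd
    simpa [Rat.den_pow] using this
  have hxnum0 : 0 < x.num := Rat.num_pos.mpr hx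
  have hA : x.num.toNat ^ d = P ^ q := by
    have h1 : ((x.num.toNat : ℤ)) ^ d = ((P:ℤ)) ^ q := by
      rw [Int.toNat_of_nonneg hxnum0.le, hPdef, Int.toNat_of_nonneg htnum.le]
      exact hnum
    exact_mod_cast h1
  have hcop : Nat.Coprime d q := by
    have hred : Nat.Coprime t.num.natAbs t.den := t.reduced
    have hna : t.num.natAbs = P := by omega
    have hcopPq : Nat.Coprime P q := hna ▸ hred
    rw [hddef]
    exact (Nat.coprime_sub_self_left (le_of_lt hPq)).mpr hcopPq
  obtain ⟨c, hc⟩ := nth_pow_of_pow_eq_pow hd0 (by omega : 0 < P) hcop hA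
  obtain ⟨e, heq⟩ := nth_pow_of_pow_eq_pow hd0 hq0 hcop hden
  have hd1 : d = 1 := by
    by_contra hne
    have hd2 : 2 ≤ d := by omega
    have he1 : 1 ≤ e := by
      rcases Nat.eq_zero_or_pos e with h0 | h1
      · rw [h0, zero_pow hd0.ne'] at heq; omega
      · exact h1
    have hce : e < c := by
      have hlt : e ^ d < c ^ d := by rw [← heq, ← hc]; omega
      by_contra hle
      push_neg at hle
      exact absurd (Nat.pow_le_pow_left hle d) (by omega)
    have hkey := ineq_lemma e he1 d hd2
    have h5 : c ^ d = e ^ d + d := by omega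
    have h6 : (e+1) ^ d ≤ c ^ d := Nat.pow_le_pow_left (by omega) d
    omega
  have hP1 : P = q + 1 := by omega
  have ht : t = 1 + 1 / (q:ℚ) := by
    have hnum' : t.num = (q:ℤ) + 1 := by omega
    have hq : (q:ℚ) ≠ 0 := by positivity
    rw [← Rat.num_div_den t, hnum']
    push_cast
    field_simp
    rw [hqdef]
  have hxval : x = t ^ q := by
    have h7 := hxd
    rw [hd1, pow_one] at h7
    exact h7
  refine ⟨q, hq0, ?_, ?_⟩
  · rw [hxval, ht]
  · rw [hyx, hxval, ht]
    ring
end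

section
/- For b = 3, c = 3: x = 3^5/2, y = 3^6, v = 3^6/2, w = 3^6/2 satisfy x^y * y^x = v^w * w^v, i.e. (3^5/2)^(3^6) * (3^6)^(3^5/2) = (3^6/2)^(3^6/2) * (3^6/2)^(3^6/2) in the form ((3^6/2)^(3^6/2))^2. -/
theorem stmt_18 :
    ((243 / 2 : ℝ)) ^ ((729 : ℝ)) * (729 : ℝ) ^ ((243 / 2 : ℝ)) =
      ((729 / 2 : ℝ)) ^ ((729 / 2 : ℝ)) * ((729 / 2 : ℝ)) ^ ((729 / 2 : ℝ)) := by
  have hrhs : ((729 / 2 : ℝ)) ^ ((729 / 2 : ℝ)) * ((729 / 2 : ℝ)) ^ ((729 / 2 : ℝ))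
      = ((729 / 2 : ℝ)) ^ (729 : ℕ) := by
    rw [← Real.rpow_add (by norm_num), ← Real.rpow_natCast]
    norm_num
  have h729 : (729 : ℝ) ^ ((243 / 2 : ℝ)) = (27 : ℝ) ^ (243 : ℕ) := by
    have : (729 : ℝ) = (27 : ℝ) ^ (2 : ℝ) := by
      rw [show ((2:ℝ)) = ((2:ℕ):ℝ) by norm_num, Real.rpow_natCast]; norm_num
    rw [this, ← Real.rpow_natCast (27:ℝ) 243, ← Real.rpow_mul (by norm_num)]
    norm_num
  have hlhs : ((243 / 2 : ℝ)) ^ ((729 : ℝ)) = ((243 / 2 : ℝ)) ^ (729 : ℕ) := by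
    rw [← Real.rpow_natCast]; norm_num
  rw [hrhs, h729, hlhs]
  have h27 : (27 : ℝ) ^ (243 : ℕ) = (3 : ℝ) ^ (729 : ℕ) := by
    rw [show (27:ℝ) = (3:ℝ)^(3:ℕ) by norm_num, ← pow_mul]
  rw [h27, show ((729:ℝ)/2) = (243/2) * 3 by norm_num, mul_pow]
end

section
/- For b = 2, c = 4: x = 2^7/3, y = 2^8, v = 2^8/3, w = 2^9/3 satisfy x^y * y^x = v^w * w^v, i.e. (128/3)^256 * 256^(128/3) = (256/3)^(512/3) * (512/3)^(256/3). -/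
theorem stmt_19 :
    ((128 / 3 : ℝ)) ^ ((256 : ℝ)) * (256 : ℝ) ^ ((128 / 3 : ℝ)) =
      ((256 / 3 : ℝ)) ^ ((512 / 3 : ℝ)) * ((512 / 3 : ℝ)) ^ ((256 / 3 : ℝ)) := by
  rw [Real.rpow_def_of_pos (by norm_num), Real.rpow_def_of_pos (by norm_num),
    Real.rpow_def_of_pos (by norm_num), Real.rpow_def_of_pos (by norm_num),
    ← Real.exp_add, ← Real.exp_add]
  congr 1
  have l128 : Real.log (128 / 3) = 7 * Real.log 2 - Real.log 3 := by
    rw [Real.log_div (by norm_num) (by norm_num),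
      show (128:ℝ) = 2 ^ (7:ℕ) by norm_num, Real.log_pow]; push_cast; ring
  have l256 : Real.log 256 = 8 * Real.log 2 := by
    rw [show (256:ℝ) = 2 ^ (8:ℕ) by norm_num, Real.log_pow]; push_cast; ring
  have l256' : Real.log (256 / 3) = 8 * Real.log 2 - Real.log 3 := by
    rw [Real.log_div (by norm_num) (by norm_num), l256]
  have l512 : Real.log (512 / 3) = 9 * Real.log 2 - Real.log 3 := by
    rw [Real.log_div (by norm_num) (by norm_num),
      show (512:ℝ) = 2 ^ (9:ℕ) by norm_num, Real.log_pow]; push_cast; ring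
  rw [l128, l256, l256', l512]; ring
end
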